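/- arXiv:2511.19451 — 6 statements merged into one kernel-verified Lean document; each statement's English description precedes it below -/
import Mathlib

section
/- Suppose f0 is bounded below on X with finite infimum γ := inf_{x ∈ X} f0(x), and suppose there exists a strictly feasible point x0 ∈ X with f1(x0) < 0. Then the superlevel set {η ≥ 0 : g(η) ≥ γ} of the dual function contains η = 0 (since g(0) = γ) and is bounded above. -/
open Filter Topology

/-- The dual function `g(η) = inf_{x ∈ X} (f0 x + η * f1 x)`. -/
noncomputable def dualFn {X : Type*} (f0 f1 : X → ℝ) (η : ℝ) : EReal :=
  ⨅ x : X, ((f0 x + η * f1 x : ℝ) : EReal)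

lemma ereal_coe_ciInf {X : Type*} [Nonempty X] (f : X → ℝ) (hbdd : BddBelow (Set.range f)) :
    ((⨅ x : X, f x : ℝ) : EReal) = ⨅ x : X, ((f x : ℝ) : EReal) := by
  have hmono : Monotone (fun r : ℝ => (r : EReal)) := fun a b h => EReal.coe_le_coe_iff.mpr h
  exact hmono.map_ciInf_of_continuousAt (continuous_coe_real_ereal.continuousAt) hbdd

/-- If `f0` is bounded below with finite infimum `γ` and there is a strictly
feasible point, then the superlevel set `{η ≥ 0 : g(η) ≥ γ}` contains `η = 0`
(indeed `g(0) = γ`) and is bounded above. -/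
theorem dualFn_superlevel_bounded {X : Type*} [Nonempty X] (f0 f1 : X → ℝ)
    (hbdd : BddBelow (Set.range f0)) (x0 : X) (hx0 : f1 x0 < 0) :
    dualFn f0 f1 0 = ((⨅ x : X, f0 x : ℝ) : EReal) ∧
    (0 : ℝ) ∈ {η : ℝ | 0 ≤ η ∧ ((⨅ x : X, f0 x : ℝ) : EReal) ≤ dualFn f0 f1 η} ∧
    BddAbove {η : ℝ | 0 ≤ η ∧ ((⨅ x : X, f0 x : ℝ) : EReal) ≤ dualFn f0 f1 η} := by
  have h0 : dualFn f0 f1 0 = ((⨅ x : X, f0 x : ℝ) : EReal) := by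
    rw [dualFn, ereal_coe_ciInf f0 hbdd]
    simp
  refine ⟨h0, ⟨le_refl 0, h0.ge⟩, ?_⟩
  set γ := ⨅ x : X, f0 x with hγ
  refine ⟨(γ - f0 x0) / f1 x0, fun η hη => ?_⟩
  obtain ⟨hη0, hηle⟩ := hη
  have h1 : dualFn f0 f1 η ≤ ((f0 x0 + η * f1 x0 : ℝ) : EReal) := iInf_le _ x0
  have h2 : (γ : EReal) ≤ ((f0 x0 + η * f1 x0 : ℝ) : EReal) := le_trans hηle h1
  have h3 : γ ≤ f0 x0 + η * f1 x0 := EReal.coe_le_coe_iff.mp h2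
  have h4 : γ - f0 x0 ≤ η * f1 x0 := by linarith
  rw [le_div_iff_of_neg hx0]
  linarith
end

section
/- (Existence of a dual optimal solution.) Suppose f0 is bounded below on X (so that inf_{x ∈ X} f0(x) > −∞) and that there exists a strictly feasible point x0 ∈ X with f1(x0) < 0. Then there exists a finite dual optimal solution η* with 0 ≤ η* < ∞ such that g(η*) = sup_{η ≥ 0} g(η). -/
open Filter Topology

/-- USC extreme value theorem for `EReal`-valued functions on a compact set. -/
lemma usc_exists_max {f : ℝ → EReal} (hf : UpperSemicontinuous f) {s : Set ℝ}
    (hs : IsCompact s) (hne : s.Nonempty) : ∃ x ∈ s, ∀ y ∈ s, f y ≤ f x := by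
  by_contra hcon
  push_neg at hcon
  set S : EReal := sSup (f '' s) with hS
  have hlt : ∀ x ∈ s, f x < S := by
    intro x hx
    obtain ⟨y, hy, hxy⟩ := hcon x hx
    exact lt_of_lt_of_le hxy (le_sSup ⟨y, hy, rfl⟩)
  have hb : ∀ x : ℝ, ∃ b : EReal, x ∈ s → f x < b ∧ b < S := by
    intro x
    by_cases hx : x ∈ s
    · obtain ⟨b, hb1, hb2⟩ := exists_between (hlt x hx)
      exact ⟨b, fun _ => ⟨hb1, hb2⟩⟩
    · exact ⟨⊤, fun h => absurd h hx⟩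
  choose b hbspec using hb
  set U : ℝ → Set ℝ := fun x => f ⁻¹' Set.Iio (b x) with hU
  have hUnhds : ∀ x ∈ s, U x ∈ 𝓝 x := by
    intro x hx
    exact (hf.isOpen_preimage (b x)).mem_nhds (hbspec x hx).1
  obtain ⟨t, hts, hcov⟩ := hs.elim_nhds_subcover U hUnhds
  have htne : t.Nonempty := by
    obtain ⟨x, hx⟩ := hne
    obtain ⟨V, hV, hxV⟩ := Set.mem_iUnion₂.1 (hcov hx)
    exact ⟨V, hV⟩
  have hbound : S ≤ t.sup' htne b := by
    apply sSup_le
    rintro v ⟨y, hy, rfl⟩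
    obtain ⟨x, hxt, hyU⟩ := Set.mem_iUnion₂.1 (hcov hy)
    exact le_trans (le_of_lt hyU) (Finset.le_sup' b hxt)
  have hltS : t.sup' htne b < S := by
    rw [Finset.sup'_lt_iff]
    intro x hxt
    exact (hbspec x (hts x hxt)).2
  exact absurd (lt_of_le_of_lt hbound hltS) (lt_irrefl S)

/-- Existence of a dual optimal solution: if `f0` is bounded below and the
problem is strictly feasible, then there exists `0 ≤ η* < ∞` attaining
`sup_{η ≥ 0} g(η)`. -/
theorem exists_dual_optimal {X : Type*} [Nonempty X] (f0 f1 : X → ℝ)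
    (hbdd : BddBelow (Set.range f0)) (x0 : X) (hx0 : f1 x0 < 0) :
    ∃ ηstar : ℝ, 0 ≤ ηstar ∧
      dualFn f0 f1 ηstar = ⨆ (η : ℝ) (_ : 0 ≤ η), dualFn f0 f1 η := by
  obtain ⟨B, hB⟩ := hbdd
  have hBle : ∀ x : X, B ≤ f0 x := fun x => hB ⟨x, rfl⟩
  set g : ℝ → EReal := dualFn f0 f1 with hg
  -- g is usc
  have husc : UpperSemicontinuous g := by
    apply upperSemicontinuous_iInf
    intro x
    exact (continuous_coe_real_ereal.comp
      (continuous_const.add (continuous_id.mul continuous_const))).upperSemicontinuous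
  -- upper bound for g via x0
  have hgle : ∀ η : ℝ, g η ≤ ((f0 x0 + η * f1 x0 : ℝ) : EReal) := fun η => iInf_le _ x0
  -- lower bound for g 0
  have hg0 : (B : EReal) ≤ g 0 := by
    apply le_iInf
    intro x
    rw [EReal.coe_le_coe_iff]
    simpa using hBle x
  -- choose M
  set M : ℝ := max 0 ((f0 x0 - B) / (-f1 x0)) with hM
  have hM0 : 0 ≤ M := le_max_left _ _
  have hMkey : f0 x0 + M * f1 x0 ≤ B := by
    have h1 : (f0 x0 - B) / (-f1 x0) ≤ M := le_max_right _ _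
    have h2 : (0:ℝ) < -f1 x0 := by linarith
    rw [div_le_iff₀ h2] at h1
    nlinarith
  -- for η ≥ M, g η ≤ g 0
  have htail : ∀ η : ℝ, M ≤ η → g η ≤ g 0 := by
    intro η hη
    refine le_trans (hgle η) (le_trans ?_ hg0)
    rw [EReal.coe_le_coe_iff]
    nlinarith
  -- max of g on [0, M]
  obtain ⟨ηstar, hη1, hη2⟩ := usc_exists_max husc (isCompact_Icc (a := 0) (b := M))
    ⟨0, by simp [hM0]⟩
  refine ⟨ηstar, hη1.1, ?_⟩
  apply le_antisymm
  · exact le_iSup₂ (f := fun η (_ : 0 ≤ η) => g η) ηstar hη1.1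
  · apply iSup₂_le
    intro η hη
    by_cases hηM : η ≤ M
    · exact hη2 η ⟨hη, hηM⟩
    · exact le_trans (htail η (le_of_lt (not_le.1 hηM))) (hη2 0 ⟨le_refl 0, hM0⟩)
end

section
/- (Complementary slackness, case η* > 0.) Suppose s : [0, ∞) → X is a selection of minimizers, i.e., for every η ≥ 0, f0(s(η)) + η f1(s(η)) = inf_{x ∈ X} (f0(x) + η f1(x)) = g(η), and suppose the function η ↦ f1(s(η)) is continuous on [0, ∞). If η* > 0 maximizes g over [0, ∞), then f1(s(η*)) = 0. -/
open Filter Topology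

/-- Complementary slackness, case `η* > 0`: if `s` is a selection of minimizers
with `η ↦ f1 (s η)` continuous on `[0, ∞)`, and `η* > 0` maximizes `g` over
`[0, ∞)`, then `f1 (s η*) = 0`. -/
theorem comp_slackness_pos {X : Type*} [Nonempty X] (f0 f1 : X → ℝ)
    (s : ℝ → X)
    (hs : ∀ η : ℝ, 0 ≤ η →
      ((f0 (s η) + η * f1 (s η) : ℝ) : EReal) = dualFn f0 f1 η)
    (hcont : ContinuousOn (fun η : ℝ => f1 (s η)) (Set.Ici (0 : ℝ)))
    (ηstar : ℝ) (hηstar : 0 < ηstar)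
    (hopt : ∀ η : ℝ, 0 ≤ η → dualFn f0 f1 η ≤ dualFn f0 f1 ηstar) :
    f1 (s ηstar) = 0 := by
  have key : ∀ η : ℝ, 0 ≤ η → (η - ηstar) * f1 (s η) ≤ 0 := by
    intro η hη
    have h1 : dualFn f0 f1 η ≤ dualFn f0 f1 ηstar := hopt η hη
    have h2 : dualFn f0 f1 ηstar ≤ ((f0 (s η) + ηstar * f1 (s η) : ℝ) : EReal) :=
      iInf_le _ (s η)
    rw [← hs η hη] at h1
    have h3 := le_trans h1 h2
    have hr : f0 (s η) + η * f1 (s η) ≤ f0 (s η) + ηstar * f1 (s η) := by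
      exact_mod_cast h3
    nlinarith
  have hca : ContinuousAt (fun η : ℝ => f1 (s η)) ηstar :=
    hcont.continuousAt (Ici_mem_nhds hηstar)
  by_contra hne
  rcases lt_or_gt_of_ne hne with hlt | hgt
  · -- f1 (s ηstar) < 0 : find η < ηstar with f1 (s η) < 0
    have hev : ∀ᶠ η in 𝓝 ηstar, f1 (s η) < 0 ∧ 0 < η :=
      Filter.Eventually.and
        (hca (Iio_mem_nhds hlt) : ∀ᶠ η in 𝓝 ηstar, f1 (s η) < 0)
        (Ioi_mem_nhds hηstar : ∀ᶠ η in 𝓝 ηstar, 0 < η)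
    have h4 : ∀ᶠ η in 𝓝[<] ηstar, f1 (s η) < 0 ∧ 0 < η ∧ η < ηstar := by
      filter_upwards [nhdsWithin_le_nhds hev, self_mem_nhdsWithin] with η h hmem
      exact ⟨h.1, h.2, hmem⟩
    obtain ⟨η, hf, hηpos, hηlt⟩ := h4.exists
    have := key η hηpos.le
    nlinarith
  · have hev : ∀ᶠ η in 𝓝 ηstar, 0 < f1 (s η) :=
      (hca (Ioi_mem_nhds hgt) : ∀ᶠ η in 𝓝 ηstar, 0 < f1 (s η))
    have h4 : ∀ᶠ η in 𝓝[>] ηstar, 0 < f1 (s η) ∧ ηstar < η := by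
      filter_upwards [nhdsWithin_le_nhds hev, self_mem_nhdsWithin] with η h hmem
      exact ⟨h, hmem⟩
    obtain ⟨η, hf, hηgt⟩ := h4.exists
    have hηpos : 0 ≤ η := le_of_lt (lt_trans hηstar hηgt)
    have := key η hηpos
    nlinarith
end

section
/- (Strong duality for the single-inequality-constrained problem.) Suppose s : [0, ∞) → X is a selection of minimizers with η ↦ f1(s(η)) continuous on [0, ∞), and suppose η* ≥ 0 maximizes g over [0, ∞). Then the point x* = s(η*) satisfies: (i) primal feasibility f1(x*) ≤ 0; (ii) complementary slackness η* · f1(x*) = 0; (iii) zero duality gap f0(x*) = g(η*); and (iv) primal optimality f0(x*) = inf{ f0(x) : x ∈ X, f1(x) ≤ 0 }. -/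
open Filter Topology

/-- Strong duality for the single-inequality-constrained problem: if `s` is a
selection of minimizers with `η ↦ f1 (s η)` continuous on `[0, ∞)` and
`η* ≥ 0` maximizes `g` over `[0, ∞)`, then `x* = s η*` is primal feasible,
complementary slackness holds, the duality gap is zero, and `x*` is primal
optimal. -/
theorem strong_duality {X : Type*} [Nonempty X] (f0 f1 : X → ℝ)
    (s : ℝ → X)
    (hs : ∀ η : ℝ, 0 ≤ η →
      ((f0 (s η) + η * f1 (s η) : ℝ) : EReal) = dualFn f0 f1 η)
    (hcont : ContinuousOn (fun η : ℝ => f1 (s η)) (Set.Ici (0 : ℝ)))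
    (ηstar : ℝ) (hηstar : 0 ≤ ηstar)
    (hopt : ∀ η : ℝ, 0 ≤ η → dualFn f0 f1 η ≤ dualFn f0 f1 ηstar) :
    f1 (s ηstar) ≤ 0 ∧
    ηstar * f1 (s ηstar) = 0 ∧
    ((f0 (s ηstar) : ℝ) : EReal) = dualFn f0 f1 ηstar ∧
    ((f0 (s ηstar) : ℝ) : EReal)
      = ⨅ (x : X) (_ : f1 x ≤ 0), ((f0 x : ℝ) : EReal) := by
  set h : ℝ → ℝ := fun η => f1 (s η) with hh
  set G : ℝ → ℝ := fun η => f0 (s η) + η * f1 (s η) with hG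
  have key : ∀ η η' : ℝ, 0 ≤ η → 0 ≤ η' → G η' ≤ G η + (η' - η) * h η := by
    intro η η' hη hη'
    have h1 : dualFn f0 f1 η' ≤ ((f0 (s η) + η' * f1 (s η) : ℝ) : EReal) :=
      iInf_le _ (s η)
    rw [← hs η' hη'] at h1
    have h2 := EReal.coe_le_coe_iff.mp h1
    simp only [hG, hh]
    linarith
  have hGmax : ∀ η : ℝ, 0 ≤ η → G η ≤ G ηstar := by
    intro η hη
    have h1 := hopt η hη
    rw [← hs η hη, ← hs ηstar hηstar] at h1
    exact EReal.coe_le_coe_iff.mp h1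
  have hright : ∀ η : ℝ, ηstar < η → h η ≤ 0 := by
    intro η hη
    have h0 : 0 ≤ η := le_trans hηstar hη.le
    have k := key η ηstar h0 hηstar
    have m := hGmax η h0
    nlinarith
  have hcw : Tendsto h (𝓝[Set.Ici (0:ℝ)] ηstar) (𝓝 (h ηstar)) :=
    (hcont ηstar hηstar).tendsto
  have hfeas : h ηstar ≤ 0 := by
    have hsub : Set.Ioi ηstar ⊆ Set.Ici (0:ℝ) := fun x hx => le_trans hηstar (le_of_lt hx)
    have ht : Tendsto h (𝓝[>] ηstar) (𝓝 (h ηstar)) :=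
      hcw.mono_left (nhdsWithin_mono _ hsub)
    exact le_of_tendsto ht (eventually_nhdsWithin_of_forall fun η hη => hright η hη)
  have hslack : ηstar * h ηstar = 0 := by
    rcases eq_or_lt_of_le hηstar with heq | hpos
    · rw [← heq]; ring
    · have hleft : ∀ η : ℝ, η ∈ Set.Ioo 0 ηstar → 0 ≤ h η := by
        intro η hη
        have k := key η ηstar hη.1.le hηstar
        have m := hGmax η hη.1.le
        nlinarith [hη.2]
      have hsub : Set.Ioo (0:ℝ) ηstar ⊆ Set.Ici (0:ℝ) := fun x hx => hx.1.le
      have ht : Tendsto h (𝓝[Set.Ioo (0:ℝ) ηstar] ηstar) (𝓝 (h ηstar)) :=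
        hcw.mono_left (nhdsWithin_mono _ hsub)
      have : NeBot (𝓝[Set.Ioo (0:ℝ) ηstar] ηstar) := right_nhdsWithin_Ioo_neBot hpos
      have hge : 0 ≤ h ηstar :=
        ge_of_tendsto ht (eventually_nhdsWithin_of_forall hleft)
      have : h ηstar = 0 := le_antisymm hfeas hge
      rw [this]; ring
  have hgap : ((f0 (s ηstar) : ℝ) : EReal) = dualFn f0 f1 ηstar := by
    rw [← hs ηstar hηstar]
    congr 1
    linarith [hslack]
  refine ⟨hfeas, hslack, hgap, ?_⟩
  apply le_antisymm
  · refine le_iInf₂ fun x hx => ?_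
    rw [hgap]
    calc dualFn f0 f1 ηstar ≤ ((f0 x + ηstar * f1 x : ℝ) : EReal) := iInf_le _ x
      _ ≤ ((f0 x : ℝ) : EReal) := by
          apply EReal.coe_le_coe_iff.mpr
          nlinarith
  · exact iInf₂_le (s ηstar) hfeas
end

section
/- (Attainment of the Legendre duality by the Gibbs measure.) Let P be a probability measure on a measurable space X, let λ > 0, and let C : X → ℝ be a bounded measurable cost function with partition function Z = ∫_X exp(−C(x)/λ) dP(x). Define the Gibbs measure Q* by Q*(B) = (1/Z) ∫_B exp(−C(x)/λ) dP(x) for measurable B. Then Q* is a probability measure absolutely continuous with respect to P, and ∫_X C dQ* + λ · D(Q*‖P) = F(P,C) = −λ · log Z; i.e., Q* attains the infimum inf_Q { U(Q,C) + λ D(Q‖P) } = F(P,C) over probability measures Q ≪ P. -/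
open MeasureTheory Classical

/-- The relative entropy (Kullback–Leibler divergence) `D(Q‖P)`, with value `+∞`
when `Q` is not absolutely continuous with respect to `P` or when the defining
integral is not finite. -/
noncomputable def klDiv {X : Type*} [MeasurableSpace X] (Q P : Measure X) : EReal :=
  if Q ≪ P ∧ Integrable (fun x => Real.log (Q.rnDeriv P x).toReal) Q then
    ((∫ x, Real.log (Q.rnDeriv P x).toReal ∂Q : ℝ) : EReal)
  else ⊤

/-- The Gibbs measure `Q*(B) = (1/Z) ∫_B exp(−C/λ) dP`. -/
noncomputable def gibbsMeasure {X : Type*} [MeasurableSpace X]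
    (P : Measure X) (lam : ℝ) (C : X → ℝ) : Measure X :=
  P.withDensity fun x =>
    ENNReal.ofReal (Real.exp (-C x / lam) / ∫ y, Real.exp (-C y / lam) ∂P)

/-- Attainment of the Legendre duality by the Gibbs measure: `Q*` is a
probability measure absolutely continuous with respect to `P`, and
`∫ C dQ* + λ D(Q*‖P) = F(P,C) = −λ log Z`; i.e. `Q*` attains the infimum
`inf_Q {U(Q,C) + λ D(Q‖P)} = F(P,C)`. -/
theorem gibbs_attains {X : Type*} [MeasurableSpace X]
    (P : Measure X) [IsProbabilityMeasure P]
    (lam : ℝ) (hlam : 0 < lam)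
    (C : X → ℝ) (hCmeas : Measurable C) (hCbdd : ∃ M : ℝ, ∀ x, |C x| ≤ M) :
    IsProbabilityMeasure (gibbsMeasure P lam C) ∧
    gibbsMeasure P lam C ≪ P ∧
    ((∫ x, C x ∂(gibbsMeasure P lam C) : ℝ) : EReal)
        + (lam : EReal) * klDiv (gibbsMeasure P lam C) P
      = ((-lam * Real.log (∫ x, Real.exp (-C x / lam) ∂P) : ℝ) : EReal) := by
  obtain ⟨M, hM⟩ := hCbdd
  set Z : ℝ := ∫ y, Real.exp (-C y / lam) ∂P with hZ
  have hexp_meas : Measurable fun x => Real.exp (-C x / lam) :=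
    (hCmeas.neg.div_const lam).exp
  have hexp_int : Integrable (fun x => Real.exp (-C x / lam)) P := by
    refine Integrable.mono' (integrable_const (Real.exp (M / lam)))
      hexp_meas.aestronglyMeasurable (ae_of_all _ fun x => ?_)
    rw [Real.norm_eq_abs, abs_of_pos (Real.exp_pos _)]
    apply Real.exp_le_exp.2
    apply div_le_div_of_nonneg_right ?_ hlam.le
    · linarith [abs_le.1 (hM x) |>.1]
  have hZpos : 0 < Z := by
    have : Real.exp (-M / lam) ≤ Z := by
      calc Real.exp (-M / lam) = ∫ _, Real.exp (-M / lam) ∂P := by simp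
      _ ≤ Z := by
        refine integral_mono (integrable_const _) hexp_int fun x => ?_
        apply Real.exp_le_exp.2
        apply div_le_div_of_nonneg_right ?_ hlam.le
        linarith [abs_le.1 (hM x) |>.2]
    linarith [Real.exp_pos (-M / lam)]
  set f : X → ENNReal := fun x => ENNReal.ofReal (Real.exp (-C x / lam) / Z) with hf
  have hf_meas : Measurable f := (hexp_meas.div_const Z).ennreal_ofReal
  have hQdef : gibbsMeasure P lam C = P.withDensity f := rfl
  have hfdiv_int : Integrable (fun x => Real.exp (-C x / lam) / Z) P :=
    hexp_int.div_const Z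
  have hprob : IsProbabilityMeasure (gibbsMeasure P lam C) := by
    constructor
    rw [hQdef, withDensity_apply _ MeasurableSet.univ, Measure.restrict_univ]
    rw [← ofReal_integral_eq_lintegral_ofReal hfdiv_int
      (ae_of_all _ fun x => div_nonneg (Real.exp_pos _).le hZpos.le)]
    rw [integral_div, ← hZ, div_self hZpos.ne']
    simp
  have hac : gibbsMeasure P lam C ≪ P := withDensity_absolutelyContinuous _ _
  refine ⟨hprob, hac, ?_⟩
  haveI := hprob
  -- rnDeriv is a.e. f
  have hrn : (gibbsMeasure P lam C).rnDeriv P =ᵐ[P] f := by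
    rw [hQdef]; exact Measure.rnDeriv_withDensity P hf_meas
  have hrnQ : (gibbsMeasure P lam C).rnDeriv P =ᵐ[gibbsMeasure P lam C] f := hac hrn
  have hlog : (fun x => Real.log ((gibbsMeasure P lam C).rnDeriv P x).toReal)
      =ᵐ[gibbsMeasure P lam C] fun x => -C x / lam - Real.log Z := by
    filter_upwards [hrnQ] with x hx
    rw [hx, hf, ENNReal.toReal_ofReal (div_nonneg (Real.exp_pos _).le hZpos.le),
      Real.log_div (Real.exp_pos _).ne' hZpos.ne', Real.log_exp]
  have hg_int : Integrable (fun x => -C x / lam - Real.log Z) (gibbsMeasure P lam C) := by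
    refine Integrable.mono' (integrable_const (M / lam + |Real.log Z|))
      ((hCmeas.neg.div_const lam).sub measurable_const).aestronglyMeasurable
      (ae_of_all _ fun x => ?_)
    rw [Real.norm_eq_abs]
    refine (abs_sub _ _).trans (add_le_add ?_ le_rfl)
    rw [abs_div, abs_neg, abs_of_pos hlam]
    exact div_le_div_of_nonneg_right (hM x) hlam.le
  have hlog_int : Integrable (fun x => Real.log ((gibbsMeasure P lam C).rnDeriv P x).toReal)
      (gibbsMeasure P lam C) := hg_int.congr hlog.symm
  have hC_int : Integrable C (gibbsMeasure P lam C) := by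
    refine Integrable.mono' (integrable_const M) hCmeas.aestronglyMeasurable
      (ae_of_all _ fun x => ?_)
    rw [Real.norm_eq_abs]; exact hM x
  have hkl : klDiv (gibbsMeasure P lam C) P
      = ((∫ x, Real.log ((gibbsMeasure P lam C).rnDeriv P x).toReal
          ∂(gibbsMeasure P lam C) : ℝ) : EReal) := by
    rw [klDiv, if_pos ⟨hac, hlog_int⟩]
  have hintlog : ∫ x, Real.log ((gibbsMeasure P lam C).rnDeriv P x).toReal
      ∂(gibbsMeasure P lam C)
      = (-(∫ x, C x ∂(gibbsMeasure P lam C)) / lam - Real.log Z) := by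
    rw [integral_congr_ae hlog]
    have : (fun x => -C x / lam - Real.log Z)
        = fun x => (-(1/lam)) * C x - Real.log Z := by
      funext x; ring
    rw [this, integral_sub ((hC_int.const_mul _)) (integrable_const _),
      integral_const_mul, integral_const]
    simp [measure_univ]
    ring
  rw [hkl, hintlog]
  rw [← EReal.coe_mul, ← EReal.coe_add]
  congr 1
  field_simp
  ring
end

section
/- (Dual direction of the Legendre duality.) Let P and Q be probability measures on a measurable space X with Q absolutely continuous with respect to P and finite relative entropy D(Q‖P) < ∞, and let λ > 0. Then −λ · D(Q‖P) = inf over bounded measurable C : X → ℝ of { ∫_X C dQ − F(P,C) }, where F(P,C) = −λ log ∫_X exp(−C/λ) dP; equivalently, λ · D(Q‖P) = sup over bounded measurable C of { −∫_X C dQ − λ log ∫_X exp(−C/λ) dP }. -/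
open MeasureTheory Filter Real
open scoped Topology

/-! Tilting `P` by `f = -C/λ` gives a probability measure `P_f` with
`D(Q‖P_f) = D(Q‖P) - ∫ f dQ + log ∫ exp f dP`, so Gibbs' inequality `D(Q‖P_f) ≥ 0` is the lower
bound. It is approached by `C = -λ log ρₙ`, where `ρₙ` is the density `dQ/dP` clamped to
`[exp (-n), exp n]`: by dominated convergence `∫ log ρₙ dQ → D(Q‖P)` and `∫ ρₙ dP → 1`.
Clamping the density, rather than truncating `log (dQ/dP)`, is what makes the second limit hold
on `{dQ/dP = 0}`, where `Real.log 0 = 0`. -/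

theorem integral_le_integral_llr_add_log_integral_exp {X : Type*} [MeasurableSpace X]
    {μ ν : Measure X} [IsProbabilityMeasure μ] [IsFiniteMeasure ν] (hμν : μ ≪ ν)
    (h_int : Integrable (llr μ ν) μ) {f : X → ℝ} (hfμ : Integrable f μ)
    (hfν : Integrable (fun x ↦ exp (f x)) ν) :
    ∫ x, f x ∂μ ≤ ∫ x, llr μ ν x ∂μ + log (∫ x, exp (f x) ∂ν) := by
  have : NeZero ν := ⟨fun h ↦ IsProbabilityMeasure.ne_zero μ (Measure.measure_univ_eq_zero.1
    (hμν (by simp [h])))⟩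
  have : IsProbabilityMeasure (ν.tilted f) := isProbabilityMeasure_tilted hfν
  have h_gibbs := InformationTheory.integral_llr_add_sub_measure_univ_nonneg
    (hμν.trans (absolutelyContinuous_tilted hfν))
    (integrable_llr_tilted_right hμν hfμ h_int hfν)
  rw [integral_llr_tilted_right hμν hfμ hfν h_int] at h_gibbs
  simp only [probReal_univ] at h_gibbs
  linarith

lemma abs_log_le_abs_log_of_le_of_le {y t : ℝ} (ht : 0 < t) (hy : min t 1 ≤ y)
    (hy' : y ≤ max t 1) : |log y| ≤ |log t| := by
  have hy₀ : 0 < y := (lt_min ht one_pos).trans_le hy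
  rcases le_total t 1 with h | h
  · rw [min_eq_left h] at hy
    rw [max_eq_right h] at hy'
    rw [← abs_neg (log t)]
    exact abs_le_abs ((log_nonpos hy₀.le hy').trans (neg_nonneg.2 (log_nonpos ht.le h)))
      (neg_le_neg (log_le_log ht hy))
  · rw [min_eq_right h] at hy
    rw [max_eq_left h] at hy'
    exact abs_le_abs (log_le_log hy₀ hy') ((neg_nonpos.2 (log_nonneg hy)).trans (log_nonneg h))

noncomputable def truncatedLog (n : ℕ) (t : ℝ) : ℝ := log (max (exp (-n)) (min t (exp n)))

lemma exp_truncatedLog (n : ℕ) (t : ℝ) :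
    exp (truncatedLog n t) = max (exp (-n)) (min t (exp n)) :=
  exp_log (lt_max_of_lt_left (exp_pos _))

@[fun_prop]
lemma measurable_truncatedLog (n : ℕ) : Measurable (truncatedLog n) := by
  unfold truncatedLog; fun_prop

lemma abs_truncatedLog_le (n : ℕ) (t : ℝ) : |truncatedLog n t| ≤ n := by
  rw [abs_le, ← exp_le_exp, ← exp_le_exp (y := (n : ℝ)), exp_truncatedLog]
  exact ⟨le_max_left _ _, max_le (exp_le_exp.2 (by simp)) (min_le_right _ _)⟩

lemma abs_truncatedLog_le_abs_log (n : ℕ) {t : ℝ} (ht : 0 < t) :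
    |truncatedLog n t| ≤ |log t| := by
  have h_low : exp (-n) ≤ 1 := exp_le_one_iff.2 (by simp)
  have h_up : 1 ≤ exp n := one_le_exp (by simp)
  refine abs_log_le_abs_log_of_le_of_le ht ?_ ?_
  · exact (min_le_min_left t h_up).trans (le_max_right _ _)
  · exact max_le (h_low.trans (le_max_right _ _)) ((min_le_left _ _).trans (le_max_left _ _))

lemma exp_truncatedLog_le (n : ℕ) {t : ℝ} (ht : 0 ≤ t) : exp (truncatedLog n t) ≤ 1 + t := by
  rw [exp_truncatedLog]
  exact max_le ((exp_le_one_iff.2 (by simp)).trans (le_add_of_nonneg_right ht))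
    ((min_le_left _ _).trans (le_add_of_nonneg_left zero_le_one))

lemma tendsto_exp_truncatedLog {t : ℝ} (ht : 0 ≤ t) :
    Tendsto (fun n ↦ exp (truncatedLog n t)) atTop (𝓝 t) := by
  simp_rw [exp_truncatedLog]
  have h_low : Tendsto (fun n : ℕ ↦ exp (-n)) atTop (𝓝 0) :=
    tendsto_exp_atBot.comp (tendsto_neg_atTop_atBot.comp tendsto_natCast_atTop_atTop)
  have h_up : (fun n : ℕ ↦ min t (exp n)) =ᶠ[atTop] fun _ ↦ t :=
    ((tendsto_exp_atTop.comp tendsto_natCast_atTop_atTop).eventually_ge_atTop t).mono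
      fun n hn ↦ min_eq_left hn
  simpa [max_eq_right ht] using h_low.max (tendsto_const_nhds.congr' h_up.symm)

lemma tendsto_truncatedLog {t : ℝ} (ht : 0 < t) :
    Tendsto (fun n ↦ truncatedLog n t) atTop (𝓝 (log t)) := by
  simpa only [Function.comp_def, log_exp] using
    (continuousAt_log ht.ne').tendsto.comp (tendsto_exp_truncatedLog ht.le)

section TruncatedLogDensity

variable {X : Type*} [MeasurableSpace X] {μ ν : Measure X}

lemma tendsto_integral_truncatedLog_rnDeriv [SigmaFinite μ] [SigmaFinite ν] (hμν : μ ≪ ν)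
    (h_int : Integrable (llr μ ν) μ) :
    Tendsto (fun n ↦ ∫ x, truncatedLog n (μ.rnDeriv ν x).toReal ∂μ) atTop
      (𝓝 (∫ x, llr μ ν x ∂μ)) := by
  have h_pos : ∀ᵐ x ∂μ, 0 < (μ.rnDeriv ν x).toReal := by
    filter_upwards [Measure.rnDeriv_pos hμν, hμν.ae_le (Measure.rnDeriv_lt_top μ ν)]
      with x h_pos h_lt_top
    exact ENNReal.toReal_pos h_pos.ne' h_lt_top.ne
  refine tendsto_integral_of_dominated_convergence (fun x ↦ |llr μ ν x|)
    (fun n ↦ ((measurable_truncatedLog n).comp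
      (μ.measurable_rnDeriv ν).ennreal_toReal).aestronglyMeasurable) h_int.abs (fun n ↦ ?_) ?_
  · filter_upwards [h_pos] with x hx
    exact abs_truncatedLog_le_abs_log n hx
  · filter_upwards [h_pos] with x hx
    exact tendsto_truncatedLog hx

lemma tendsto_integral_exp_truncatedLog_rnDeriv [IsFiniteMeasure μ] [IsFiniteMeasure ν]
    (hμν : μ ≪ ν) :
    Tendsto (fun n ↦ ∫ x, exp (truncatedLog n (μ.rnDeriv ν x).toReal) ∂ν) atTop
      (𝓝 (μ.real Set.univ)) := by
  rw [← Measure.integral_toReal_rnDeriv hμν]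
  refine tendsto_integral_of_dominated_convergence (fun x ↦ 1 + (μ.rnDeriv ν x).toReal)
    (fun n ↦ ((measurable_truncatedLog n).comp
      (μ.measurable_rnDeriv ν).ennreal_toReal).exp.aestronglyMeasurable)
    ((integrable_const 1).add Measure.integrable_toReal_rnDeriv)
    (fun n ↦ ae_of_all _ fun x ↦ ?_) (ae_of_all _ fun x ↦ ?_)
  · rw [norm_of_nonneg (exp_pos _).le]
    exact exp_truncatedLog_le n ENNReal.toReal_nonneg
  · exact tendsto_exp_truncatedLog ENNReal.toReal_nonneg

end TruncatedLogDensity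

/-- Dual direction of the Legendre duality (Donsker–Varadhan variational
characterization of relative entropy): for `Q ≪ P` with finite relative entropy
`D(Q‖P) = ∫ log (dQ/dP) dQ`,
`−λ D(Q‖P) = inf_{C bounded measurable} { ∫ C dQ − F(P,C) }`, where
`F(P,C) = −λ log ∫ exp(−C/λ) dP`. -/
theorem legendre_dual_direction {X : Type*} [MeasurableSpace X]
    (P Q : Measure X) [IsProbabilityMeasure P] [IsProbabilityMeasure Q]
    (hQP : Q ≪ P)
    (lam : ℝ) (hlam : 0 < lam)
    (hint : Integrable (fun x => Real.log (Q.rnDeriv P x).toReal) Q) :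
    IsGLB
      {r : ℝ | ∃ C : X → ℝ, Measurable C ∧ (∃ M : ℝ, ∀ x, |C x| ≤ M) ∧
        r = ∫ x, C x ∂Q - (-lam * Real.log (∫ x, Real.exp (-C x / lam) ∂P))}
      (-lam * ∫ x, Real.log (Q.rnDeriv P x).toReal ∂Q) := by
  change Integrable (llr Q P) Q at hint
  change IsGLB _ (-lam * ∫ x, llr Q P x ∂Q)
  refine ⟨?_, fun b hb ↦ ?_⟩
  · rintro r ⟨C, hC, ⟨M, hM⟩, rfl⟩
    have hf_bound : ∀ x, |-C x / lam| ≤ M / lam := fun x ↦ by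
      rw [abs_div, abs_neg, abs_of_pos hlam]
      exact div_le_div_of_nonneg_right (hM x) hlam.le
    have hDV := integral_le_integral_llr_add_log_integral_exp hQP hint
      (Integrable.of_bound (by fun_prop) _ (ae_of_all _ hf_bound))
      (Integrable.of_bound (by fun_prop) (exp (M / lam)) (ae_of_all _ fun x ↦ by
        rw [norm_of_nonneg (exp_pos _).le, exp_le_exp]
        exact (le_abs_self _).trans (hf_bound x)))
    rw [integral_div, integral_neg, div_le_iff₀ hlam] at hDV
    nlinarith
  · set g : ℕ → X → ℝ := fun n x ↦ truncatedLog n (Q.rnDeriv P x).toReal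
    have h_value : ∀ n, ∫ x, -lam * g n x ∂Q - (-lam * log (∫ x, exp (-(-lam * g n x) / lam) ∂P))
        = -lam * ∫ x, g n x ∂Q + lam * log (∫ x, exp (g n x) ∂P) := fun n ↦ by
      simp_rw [neg_mul, neg_neg, mul_div_cancel_left₀ _ hlam.ne', integral_neg, integral_const_mul]
      ring
    have h_log : Tendsto (fun n ↦ log (∫ x, exp (g n x) ∂P)) atTop (𝓝 0) := by
      have h_exp := tendsto_integral_exp_truncatedLog_rnDeriv hQP
      rw [probReal_univ] at h_exp
      simpa [Function.comp_def] using (continuousAt_log one_ne_zero).tendsto.comp h_exp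
    have h_lim := ((tendsto_integral_truncatedLog_rnDeriv hQP hint).const_mul (-lam)).add
      (h_log.const_mul lam)
    rw [mul_zero, add_zero] at h_lim
    refine ge_of_tendsto' h_lim fun n ↦ hb ⟨fun x ↦ -lam * g n x, by fun_prop,
      ⟨lam * n, fun x ↦ ?_⟩, (h_value n).symm⟩
    rw [abs_mul, abs_neg, abs_of_pos hlam]
    exact mul_le_mul_of_nonneg_left (abs_truncatedLog_le n _) hlam.le
end
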